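/- Let n, k ∈ ℕ with k < n, let H ⊆ ℝ with |H| ≥ n+1, let ω = (ω₁, …, ω_n) : H → ℝⁿ be an n-dimensional positive Chebyshev system over H such that ω_{⟨k⟩} and ω_{⟨k+1⟩} are k- and (k+1)-dimensional positive Chebyshev systems over H, and let f : H → ℝ. Then for all pairwise distinct x₁, …, x_{n+1} ∈ H the following identity holds: Φ_{(ω,f)}(x₁, …, x_{n+1}) · (Φ_{ω_{⟨k⟩}}(x₁, …, x_k))^{n−k} / ∏_{j=k+1}^{n+1} Φ_{ω_{⟨k+1⟩}}(x₁, …, x_k, x_j) equals the determinant of the (n−k+1)×(n−k+1) matrix whose columns are indexed by j ∈ {k+1, …, n+1}, whose first n−k rows have entries [x₁, …, x_k, x_j; ω_i]_{ω_{⟨k+1⟩}} for i ∈ {k+1, …, n}, and whose last row has entries [x₁, …, x_k, x_j; f]_{ω_{⟨k+1⟩}}. -/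

import Mathlib

/-!
Sylvester's determinant identity: if the leading `k × k` block `A` of a square matrix `M` is
invertible, the matrix of the minors of `M` that border `A` by one further row `i` and column `j`
has determinant `det A ^ (m - 1) * det M`, `m` being the number of remaining rows, because both
sides reduce to the Schur complement of `A`. For the collocation matrix of `(ω, f)` at `x`, `A` is
the matrix of `ω⟨k⟩` at `x₁, …, x_k`, invertible since `ω⟨k⟩` is a Chebyshev system, and the
bordered minors are the numerators of the divided differences in the statement; dividing column `j`
by their common denominator `Φ_{ω⟨k+1⟩}(x₁, …, x_k, x_j)` gives the identity.
-/

/-- `Φ_ω(x₁,…,x_m) = det(ω_i(x_j))`. -/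
noncomputable def Phi {m : ℕ} (ω : Fin m → ℝ → ℝ) (x : Fin m → ℝ) : ℝ :=
  Matrix.det (Matrix.of fun i j => ω i (x j))

/-- `ω` is an `m`-dimensional positive Chebyshev system over `H`. -/
def IsPosChebyshev {m : ℕ} (ω : Fin m → ℝ → ℝ) (H : Set ℝ) : Prop :=
  ∀ x : Fin m → ℝ, (∀ i, x i ∈ H) → StrictMono x → 0 < Phi ω x

/-- `f` is convex with respect to the `m`-dimensional system `ω` on `S`. -/
def IsConvexWRT {m : ℕ} (ω : Fin m → ℝ → ℝ) (S : Set ℝ) (f : ℝ → ℝ) : Prop :=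
  ∀ x : Fin (m + 1) → ℝ, (∀ i, x i ∈ S) → StrictMono x → 0 ≤ Phi (Fin.snoc ω f) x

/-- The generalized divided difference `[x₁,…,x_k; f]_{ω⟨k⟩}`:
the numerator replaces the last function `ω_k` by `f`. -/
noncomputable def divDiff {k : ℕ} (ω : Fin k → ℝ → ℝ) (f : ℝ → ℝ) (x : Fin k → ℝ) : ℝ :=
  Phi (fun i => if (i : ℕ) + 1 = k then f else ω i) x / Phi ω x

namespace Matrix

variable {ι κ K : Type*} [Fintype ι] [DecidableEq ι] [Field K]

def borderedMinor (M : Matrix (ι ⊕ κ) (ι ⊕ κ) K) (i j : κ) : Matrix (ι ⊕ Fin 1) (ι ⊕ Fin 1) K :=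
  M.submatrix (Sum.elim Sum.inl fun _ => Sum.inr i) (Sum.elim Sum.inl fun _ => Sum.inr j)

theorem det_borderedMinor (M : Matrix (ι ⊕ κ) (ι ⊕ κ) K) [Invertible M.toBlocks₁₁] (i j : κ) :
    (M.borderedMinor i j).det = M.toBlocks₁₁.det *
      (M.toBlocks₂₂ - M.toBlocks₂₁ * ⅟M.toBlocks₁₁ * M.toBlocks₁₂) i j := by
  have hblocks : M.borderedMinor i j = fromBlocks M.toBlocks₁₁
      (of fun a _ => M.toBlocks₁₂ a j) (of fun _ b => M.toBlocks₂₁ i b)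
      (of fun _ _ => M.toBlocks₂₂ i j) := by
    ext (a | a) (b | b) <;> rfl
  rw [hblocks, det_fromBlocks₁₁, det_fin_one]
  simp [mul_apply, Finset.sum_mul]

theorem det_of_det_borderedMinor [Fintype κ] [DecidableEq κ] [Nonempty κ]
    (M : Matrix (ι ⊕ κ) (ι ⊕ κ) K) (hA : M.toBlocks₁₁.det ≠ 0) :
    (of fun i j => (M.borderedMinor i j).det).det =
      M.toBlocks₁₁.det ^ (Fintype.card κ - 1) * M.det := by
  let := M.toBlocks₁₁.invertibleOfIsUnitDet hA.isUnit
  have hsmul : (of fun i j => (M.borderedMinor i j).det) = M.toBlocks₁₁.det •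
      (M.toBlocks₂₂ - M.toBlocks₂₁ * ⅟M.toBlocks₁₁ * M.toBlocks₁₂) := by
    ext i j
    simp [det_borderedMinor]
  have hschur : M.det = M.toBlocks₁₁.det *
      (M.toBlocks₂₂ - M.toBlocks₂₁ * ⅟M.toBlocks₁₁ * M.toBlocks₁₂).det := by
    conv_lhs => rw [← fromBlocks_toBlocks M]
    exact det_fromBlocks₁₁ ..
  rw [hsmul, det_smul, hschur, ← mul_assoc, ← pow_succ, Nat.sub_add_cancel Fintype.card_pos]

end Matrix

theorem Fin.snoc_eq_dite {n : ℕ} {α : Sort*} (ω : Fin n → α) (a : α) (p : Fin (n + 1)) :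
    (Fin.snoc ω a : Fin (n + 1) → α) p = if h : (p : ℕ) < n then ω ⟨p, h⟩ else a := by
  induction p using Fin.lastCases <;> simp

theorem Phi_comp_finCongr {m m' : ℕ} (h : m' = m) (ω : Fin m → ℝ → ℝ) (x : Fin m → ℝ) :
    Phi (ω ∘ finCongr h) (x ∘ finCongr h) = Phi ω x :=
  Matrix.det_submatrix_equiv_self (finCongr h) (Matrix.of fun i j => ω i (x j))

theorem IsPosChebyshev.Phi_ne_zero {m : ℕ} {ω : Fin m → ℝ → ℝ} {H : Set ℝ}
    (hω : IsPosChebyshev ω H) {x : Fin m → ℝ} (hxH : ∀ i, x i ∈ H)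
    (hinj : Function.Injective x) : Phi ω x ≠ 0 := by
  set σ := Tuple.sort x
  have hsorted : StrictMono (x ∘ σ) :=
    (Tuple.monotone_sort x).strictMono_of_injective (hinj.comp σ.injective)
  have hperm : Phi ω (x ∘ σ) = Equiv.Perm.sign σ * Phi ω x :=
    Matrix.det_permute' σ (Matrix.of fun i j => ω i (x j))
  have hpos := hω (x ∘ σ) (fun i => hxH _) hsorted
  rw [hperm] at hpos
  exact right_ne_zero_of_mul hpos.ne'

theorem divDiff_eq_div {k : ℕ} (ω : Fin (k + 1) → ℝ → ℝ) (f : ℝ → ℝ) (x : Fin (k + 1) → ℝ) :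
    divDiff ω f x = Phi (Fin.snoc (fun t => ω t.castSucc) f) x / Phi ω x := by
  rw [divDiff]
  congr 2
  ext t : 1
  induction t using Fin.lastCases with
  | last => simp
  | cast t => simp [t.isLt.ne]

section Collocation

variable {k m : ℕ} (u : Fin (k + m) → ℝ → ℝ) (y : Fin (k + m) → ℝ)

noncomputable def collocationMatrix : Matrix (Fin k ⊕ Fin m) (Fin k ⊕ Fin m) ℝ :=
  (Matrix.of fun p q => u p (y q)).submatrix finSumFinEquiv finSumFinEquiv

theorem det_collocationMatrix : (collocationMatrix u y).det = Phi u y :=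
  Matrix.det_submatrix_equiv_self finSumFinEquiv _

theorem det_toBlocks₁₁_collocationMatrix :
    (collocationMatrix u y).toBlocks₁₁.det =
      Phi (fun i => u (Fin.castAdd m i)) (fun i => y (Fin.castAdd m i)) :=
  rfl

theorem det_borderedMinor_collocationMatrix (i j : Fin m) :
    ((collocationMatrix u y).borderedMinor i j).det =
      Phi (Fin.snoc (fun t => u (Fin.castAdd m t)) (u (Fin.natAdd k i)))
        (Fin.snoc (fun t => y (Fin.castAdd m t)) (y (Fin.natAdd k j))) := by
  rw [Phi, ← Matrix.det_submatrix_equiv_self finSumFinEquiv]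
  congr 1
  have hcastAdd : ∀ t : Fin k, Fin.castAdd 1 t = t.castSucc := fun _ => rfl
  have hnatAdd : ∀ t : Fin 1, Fin.natAdd k t = Fin.last k := fun t => Fin.ext (by simp)
  ext (p | p) (q | q) <;> simp [collocationMatrix, Matrix.borderedMinor, hcastAdd, hnatAdd]

theorem det_of_Phi_snoc [NeZero m]
    (hA : Phi (fun i => u (Fin.castAdd m i)) (fun i => y (Fin.castAdd m i)) ≠ 0) :
    (Matrix.of fun i j : Fin m =>
        Phi (Fin.snoc (fun t => u (Fin.castAdd m t)) (u (Fin.natAdd k i)))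
          (Fin.snoc (fun t => y (Fin.castAdd m t)) (y (Fin.natAdd k j)))).det =
      Phi (fun i => u (Fin.castAdd m i)) (fun i => y (Fin.castAdd m i)) ^ (m - 1) * Phi u y := by
  rw [← det_toBlocks₁₁_collocationMatrix] at hA ⊢
  simp only [← det_borderedMinor_collocationMatrix, ← det_collocationMatrix u y]
  simpa using (collocationMatrix u y).det_of_det_borderedMinor hA

end Collocation

/-- The identity \eqref{fid}:
`Φ_{(ω,f)}(x₁,…,x_{n+1}) · (Φ_{ω⟨k⟩}(x₁,…,x_k))^{n-k} / ∏_{j=k+1}^{n+1} Φ_{ω⟨k+1⟩}(x₁,…,x_k,x_j)`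
equals the determinant of the `(n-k+1) × (n-k+1)` matrix whose first `n-k` rows have entries
`[x₁,…,x_k,x_j; ω_i]_{ω⟨k+1⟩}` (`i ∈ {k+1,…,n}`) and whose last row has entries
`[x₁,…,x_k,x_j; f]_{ω⟨k+1⟩}` (`j ∈ {k+1,…,n+1}`). -/
theorem fundamental_divided_difference_identity (n k : ℕ) (hk : k < n) (H : Set ℝ)
    (ω : Fin n → ℝ → ℝ) (f : ℝ → ℝ)
    (hωk : IsPosChebyshev (fun i : Fin k => ω (Fin.castLE (by omega) i)) H)
    (x : Fin (n + 1) → ℝ) (hxH : ∀ i, x i ∈ H) (hinj : Function.Injective x) :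
    Phi (Fin.snoc ω f) x *
        (Phi (fun i : Fin k => ω (Fin.castLE (by omega) i))
          (fun i : Fin k => x (Fin.castLE (by omega) i))) ^ (n - k) /
      ∏ j : Fin (n - k + 1),
        Phi (fun i : Fin (k + 1) => ω (Fin.castLE hk i))
          (Fin.snoc (fun i : Fin k => x (Fin.castLE (by omega) i))
            (x ⟨k + (j : ℕ), by have := j.isLt; omega⟩))
    = Matrix.det (Matrix.of fun i j : Fin (n - k + 1) =>
        if h : (i : ℕ) < n - k then
          divDiff (fun t : Fin (k + 1) => ω (Fin.castLE hk t))
            (ω ⟨k + (i : ℕ), by omega⟩)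
            (Fin.snoc (fun t : Fin k => x (Fin.castLE (by omega) t))
              (x ⟨k + (j : ℕ), by have := j.isLt; omega⟩))
        else
          divDiff (fun t : Fin (k + 1) => ω (Fin.castLE hk t)) f
            (Fin.snoc (fun t : Fin k => x (Fin.castLE (by omega) t))
              (x ⟨k + (j : ℕ), by have := j.isLt; omega⟩))) := by
  have hkn : k + (n - k + 1) = n + 1 := by omega
  set u := (Fin.snoc ω f : Fin (n + 1) → ℝ → ℝ) ∘ finCongr hkn
  set y := x ∘ finCongr hkn
  have hlow : ∀ i : Fin k, u (Fin.castAdd _ i) = ω (Fin.castLE hk.le i) := fun i => by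
    simp only [u, Function.comp_apply, finCongr_apply, Fin.snoc_eq_dite, Fin.val_cast,
      Fin.val_castAdd, i.isLt.trans hk, dif_pos]
    rfl
  have hhigh : ∀ i : Fin (n - k + 1),
      u (Fin.natAdd k i) = if h : (i : ℕ) < n - k then ω ⟨k + (i : ℕ), by omega⟩ else f :=
    fun i => by simp [u, Fin.snoc_eq_dite, Nat.lt_sub_iff_add_lt']
  have hA : Phi (fun i => u (Fin.castAdd _ i)) (fun i => y (Fin.castAdd _ i)) =
      Phi (fun i : Fin k => ω (Fin.castLE (by omega) i))
        (fun i : Fin k => x (Fin.castLE (by omega) i)) := by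
    simp only [hlow]
    rfl
  have hA0 : Phi (fun i => u (Fin.castAdd _ i)) (fun i => y (Fin.castAdd _ i)) ≠ 0 :=
    hA ▸ hωk.Phi_ne_zero (fun _ => hxH _) (hinj.comp (Fin.castLE_injective _))
  let D (j : Fin (n - k + 1)) := Phi (fun t : Fin (k + 1) => ω (Fin.castLE hk t))
    (Fin.snoc (fun t : Fin k => x (Fin.castLE (by omega) t)) (x ⟨k + (j : ℕ), by omega⟩))
  symm
  calc _ = (Matrix.of fun i j : Fin (n - k + 1) => (D j)⁻¹ *
        Phi (Fin.snoc (fun t => u (Fin.castAdd _ t)) (u (Fin.natAdd k i)))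
          (Fin.snoc (fun t => y (Fin.castAdd _ t)) (y (Fin.natAdd k j)))).det := by
        congr 1
        ext i j
        simp only [Matrix.of_apply, hlow, hhigh]
        split_ifs <;> rw [divDiff_eq_div, div_eq_inv_mul] <;> rfl
    _ = (∏ j, D j)⁻¹ * (Phi (fun i => u (Fin.castAdd _ i)) (fun i => y (Fin.castAdd _ i)) ^
          (n - k + 1 - 1) * Phi u y) := by
        rw [← det_of_Phi_snoc u y hA0, ← Finset.prod_inv_distrib]
        exact Matrix.det_mul_row _ _
    _ = _ := by
        rw [hA, Phi_comp_finCongr, Nat.add_sub_cancel]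
        ring
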